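/- arXiv:2108.12142 — 2 statements merged into one kernel-verified Lean document; each statement's English description precedes it below -/
import Mathlib

section
/- Let L be the Laplacian matrix of a weight-balanced directed graph G (i.e., row sums equal column sums of the adjacency matrix). Then L + Lᵀ is positive semidefinite. Conversely, if L + Lᵀ is positive semidefinite for the Laplacian of a directed graph with nonnegative weights, then G is weight-balanced. -/
open Matrix

/-!
For every `x`, `xᵀ L x = ∑ᵢⱼ aᵢⱼ xᵢ (xᵢ - xⱼ)`. When `G` is weight-balanced, `Lᵀ` is the Laplacian
of the reversed graph, so adding the two forms and swapping indices in the second gives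
`xᵀ (L + Lᵀ) x = ∑ᵢⱼ aᵢⱼ (xᵢ - xⱼ)²  ≥ 0`. Conversely, `L 𝟙 = 0` makes the form of the
semidefinite matrix `L + Lᵀ` vanish at `𝟙`, hence `(L + Lᵀ) 𝟙 = Lᵀ 𝟙 = 0`; the entries of
`Lᵀ 𝟙` are the differences between out- and in-degrees.
-/

variable {n R : Type*} [Fintype n] [DecidableEq n]

def IsWeightBalanced [AddCommMonoid R] (A : Matrix n n R) : Prop :=
  ∀ i, ∑ j, A i j = ∑ j, A j i

def laplacian [Ring R] (A : Matrix n n R) : Matrix n n R :=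
  diagonal (fun i => ∑ j, A i j) - A

section Ring

variable [Ring R] (A : Matrix n n R)

theorem laplacian_mulVec_one : laplacian A *ᵥ 1 = 0 := by
  ext i
  rw [laplacian, sub_mulVec, Pi.sub_apply, mulVec_diagonal]
  simp [mulVec, dotProduct]

theorem laplacian_transpose_mulVec_one :
    (laplacian A)ᵀ *ᵥ 1 = fun i => ∑ j, A i j - ∑ j, A j i := by
  ext i
  rw [laplacian, transpose_sub, diagonal_transpose, sub_mulVec, Pi.sub_apply, mulVec_diagonal]
  simp [mulVec, dotProduct]

theorem laplacian_transpose_of_balanced (hA : IsWeightBalanced A) :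
    (laplacian A)ᵀ = laplacian Aᵀ := by
  rw [laplacian, laplacian, transpose_sub, diagonal_transpose, funext hA]
  simp only [transpose_apply]

end Ring

section CommRing

variable [CommRing R]

theorem dotProduct_laplacian_mulVec (A : Matrix n n R) (x : n → R) :
    x ⬝ᵥ (laplacian A *ᵥ x) = ∑ i, ∑ j, A i j * (x i * (x i - x j)) := by
  rw [laplacian, sub_mulVec, dotProduct_sub]
  simp only [dotProduct, mulVec_diagonal]
  simp only [mulVec, dotProduct, Finset.mul_sum, Finset.sum_mul, ← Finset.sum_sub_distrib]
  exact Finset.sum_congr rfl fun i _ => Finset.sum_congr rfl fun j _ => by ring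

theorem dotProduct_laplacian_add_transpose_mulVec_of_balanced (A : Matrix n n R)
    (hA : IsWeightBalanced A) (x : n → R) :
    x ⬝ᵥ ((laplacian A + (laplacian A)ᵀ) *ᵥ x) = ∑ i, ∑ j, A i j * (x i - x j) ^ 2 := by
  rw [add_mulVec, dotProduct_add, laplacian_transpose_of_balanced A hA,
    dotProduct_laplacian_mulVec, dotProduct_laplacian_mulVec,
    Finset.sum_comm (f := fun i j => Aᵀ i j * _)]
  simp only [transpose_apply, ← Finset.sum_add_distrib]
  exact Finset.sum_congr rfl fun i _ => Finset.sum_congr rfl fun j _ => by ring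

end CommRing

theorem posSemidef_laplacian_add_transpose_of_balanced [CommRing R] [LinearOrder R]
    [IsStrictOrderedRing R] [StarRing R] [TrivialStar R] (A : Matrix n n R)
    (h_nonneg : ∀ i j, 0 ≤ A i j) (hA : IsWeightBalanced A) :
    (laplacian A + (laplacian A)ᵀ).PosSemidef := by
  refine posSemidef_iff_dotProduct_mulVec.mpr ⟨?_, fun x => ?_⟩
  · simpa using isHermitian_add_transpose_self (laplacian A)
  · rw [star_trivial, dotProduct_laplacian_add_transpose_mulVec_of_balanced A hA]
    exact Finset.sum_nonneg fun i _ => Finset.sum_nonneg fun j _ =>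
      mul_nonneg (h_nonneg i j) (sq_nonneg _)

open scoped ComplexOrder in
theorem balanced_of_posSemidef_laplacian_add_transpose {𝕜 : Type*} [RCLike 𝕜]
    (A : Matrix n n 𝕜) (h : (laplacian A + (laplacian A)ᵀ).PosSemidef) :
    IsWeightBalanced A := by
  have h_form : star 1 ⬝ᵥ ((laplacian A + (laplacian A)ᵀ) *ᵥ 1) = 0 := by
    rw [star_one, add_mulVec, laplacian_mulVec_one, zero_add, dotProduct_transpose_mulVec,
      laplacian_mulVec_one, dotProduct_zero]
  have h_kernel := (h.dotProduct_mulVec_zero_iff 1).mp h_form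
  rw [add_mulVec, laplacian_mulVec_one, zero_add, laplacian_transpose_mulVec_one] at h_kernel
  exact fun i => sub_eq_zero.mp (congrFun h_kernel i)

/-- A weighted digraph with nonnegative adjacency matrix `A` and Laplacian
`L = Δ - A` is weight-balanced if and only if `L + Lᵀ` is positive semidefinite. -/
theorem weight_balanced_iff_laplacian_posSemidef {N : ℕ}
    (A : Matrix (Fin N) (Fin N) ℝ) (hA : ∀ i j, 0 ≤ A i j)
    (L : Matrix (Fin N) (Fin N) ℝ)
    (hL : L = Matrix.diagonal (fun i => ∑ j, A i j) - A) :
    (∀ i, ∑ j, A i j = ∑ j, A j i) ↔ (L + Lᵀ).PosSemidef := by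
  rw [show L = laplacian A from hL]
  exact ⟨posSemidef_laplacian_add_transpose_of_balanced A hA,
    balanced_of_posSemidef_laplacian_add_transpose A⟩
end

section
/- Let F : ℝⁿ → ℝⁿ be continuous on a nonempty compact convex set D, and suppose D_k is a sequence of nonempty compact convex sets converging to D in Hausdorff distance, each VI(D_k, F) and VI(D, F) having unique solutions x_k* and x* respectively (e.g., because F is strongly monotone). Then x_k* → x* as k → ∞. -/
open scoped RealInnerProductSpace Topology
open Filter Metric

/-!
Since `H(D_k, D) → 0` and `D` is compact, the solutions `x_k ∈ D_k` eventually stay in a compact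
neighbourhood of `D`, so it suffices to show that every cluster point `x` of `(x_k)` equals `x*`.
Along an ultrafilter converging to `x`, each `y ∈ D` is the limit of points `y_k ∈ D_k`, and
passing to the limit in `0 ≤ ⟪y_k - x_k, F x_k⟫` shows that `x` solves `VI(D, F)`.
Uniqueness gives `x = x*`.
-/

section HausdorffLimits

variable {α ι : Type*} [PseudoMetricSpace α] {l : Filter ι} {A : ι → Set α} {D : Set α}

theorem tendsto_infDist_of_tendsto_hausdorffDist
    (hfin : ∀ k, hausdorffEDist (A k) D ≠ ⊤)
    (hH : Tendsto (fun k => hausdorffDist (A k) D) l (𝓝 0))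
    {x : ι → α} (hx : ∀ k, x k ∈ A k) :
    Tendsto (fun k => infDist (x k) D) l (𝓝 0) :=
  squeeze_zero (fun _ => infDist_nonneg)
    (fun k => infDist_le_hausdorffDist_of_mem (hx k) (hfin k)) hH

theorem mem_of_tendsto_of_tendsto_hausdorffDist [l.NeBot]
    (hDc : IsClosed D) (hDne : D.Nonempty)
    (hfin : ∀ k, hausdorffEDist (A k) D ≠ ⊤)
    (hH : Tendsto (fun k => hausdorffDist (A k) D) l (𝓝 0))
    {x : ι → α} (hx : ∀ k, x k ∈ A k) {a : α} (hxa : Tendsto x l (𝓝 a)) :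
    a ∈ D := by
  have hlim : Tendsto (fun k => infDist (x k) D) l (𝓝 (infDist a D)) :=
    (continuous_infDist_pt D).continuousAt.tendsto.comp hxa
  rw [hDc.mem_iff_infDist_zero hDne]
  exact tendsto_nhds_unique hlim (tendsto_infDist_of_tendsto_hausdorffDist hfin hH hx)

theorem exists_tendsto_of_tendsto_hausdorffDist
    (hAc : ∀ k, IsCompact (A k)) (hAne : ∀ k, (A k).Nonempty)
    (hfin : ∀ k, hausdorffEDist (A k) D ≠ ⊤)
    (hH : Tendsto (fun k => hausdorffDist (A k) D) l (𝓝 0))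
    {y : α} (hy : y ∈ D) :
    ∃ y' : ι → α, (∀ k, y' k ∈ A k) ∧ Tendsto y' l (𝓝 y) := by
  choose y' hy'A hy'dist using fun k => (hAc k).exists_infDist_eq_dist (hAne k) y
  refine ⟨y', hy'A, tendsto_iff_dist_tendsto_zero.2 <| squeeze_zero (fun _ => dist_nonneg)
    (fun k => ?_) hH⟩
  calc dist (y' k) y = infDist y (A k) := by rw [dist_comm, hy'dist]
    _ ≤ hausdorffDist D (A k) :=
      infDist_le_hausdorffDist_of_mem hy (hausdorffEDist_comm.trans_ne (hfin k))
    _ = hausdorffDist (A k) D := hausdorffDist_comm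

end HausdorffLimits

section VariationalInequality

variable {E ι : Type*} [NormedAddCommGroup E] [InnerProductSpace ℝ E]

/-- `x` solves the variational inequality `VI(D, F)`. -/
def IsVISolution (D : Set E) (F : E → E) (x : E) : Prop :=
  x ∈ D ∧ ∀ y ∈ D, 0 ≤ ⟪y - x, F x⟫

theorem IsVISolution.of_tendsto_hausdorffDist {l : Filter ι} [l.NeBot] {A : ι → Set E}
    {D : Set E} {F : E → E} {x : ι → E} {a : E}
    (hAc : ∀ k, IsCompact (A k)) (hAne : ∀ k, (A k).Nonempty)
    (hDc : IsClosed D) (hDne : D.Nonempty)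
    (hfin : ∀ k, hausdorffEDist (A k) D ≠ ⊤)
    (hH : Tendsto (fun k => hausdorffDist (A k) D) l (𝓝 0))
    (hF : ContinuousAt F a) (hsol : ∀ k, IsVISolution (A k) F (x k))
    (hxa : Tendsto x l (𝓝 a)) :
    IsVISolution D F a := by
  refine ⟨mem_of_tendsto_of_tendsto_hausdorffDist hDc hDne hfin hH (fun k => (hsol k).1) hxa,
    fun y hy => ?_⟩
  obtain ⟨y', hy'A, hy'y⟩ := exists_tendsto_of_tendsto_hausdorffDist hAc hAne hfin hH hy
  exact ge_of_tendsto' ((hy'y.sub hxa).inner (hF.tendsto.comp hxa))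
    fun k => (hsol k).2 (y' k) (hy'A k)

end VariationalInequality

theorem vi_solution_continuity_in_constraint_general {n : ℕ}
    (D : Set (EuclideanSpace ℝ (Fin n)))
    (hDne : D.Nonempty) (hDc : IsCompact D)
    (Dk : ℕ → Set (EuclideanSpace ℝ (Fin n)))
    (hDk : ∀ k, (Dk k).Nonempty ∧ IsCompact (Dk k) ∧ Convex ℝ (Dk k))
    (hH : Tendsto (fun k => Metric.hausdorffDist (Dk k) D) atTop (nhds 0))
    (F : EuclideanSpace ℝ (Fin n) → EuclideanSpace ℝ (Fin n)) (hF : Continuous F)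
    (xk : ℕ → EuclideanSpace ℝ (Fin n))
    (hxk : ∀ k, xk k ∈ Dk k ∧ ∀ y ∈ Dk k, 0 ≤ ⟪y - xk k, F (xk k)⟫)
    (xs : EuclideanSpace ℝ (Fin n))
    (huniq : ∀ x, x ∈ D → (∀ y ∈ D, 0 ≤ ⟪y - x, F x⟫) → x = xs) :
    Tendsto xk atTop (nhds xs) := by
  have hfin : ∀ k, hausdorffEDist (Dk k) D ≠ ⊤ := fun k =>
    hausdorffEDist_ne_top_of_nonempty_of_bounded (hDk k).1 hDne
      (hDk k).2.1.isBounded hDc.isBounded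
  have hnear : ∀ᶠ k in atTop, xk k ∈ cthickening 1 D := by
    filter_upwards [(tendsto_infDist_of_tendsto_hausdorffDist hfin hH fun k => (hxk k).1).eventually
      (gt_mem_nhds one_pos)] with k hk
    exact thickening_subset_cthickening 1 D ((mem_thickening_iff_infDist_lt hDne).2 hk)
  refine hDc.cthickening.tendsto_nhds_of_unique_mapClusterPt hnear fun x _ hx => ?_
  obtain ⟨U, hU, hxU⟩ := mapClusterPt_iff_ultrafilter.1 hx
  have hsol : IsVISolution D F x :=
    .of_tendsto_hausdorffDist (fun k => (hDk k).2.1) (fun k => (hDk k).1) hDc.isClosed hDne hfin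
      (hH.mono_left hU) hF.continuousAt hxk hxU
  exact huniq x hsol.1 hsol.2

/-- Continuity of the VI solution map in the constraint set: if compact convex sets
`Dk` converge to `D` in Hausdorff distance, `F` is continuous, and each `VI(Dk, F)` and
`VI(D, F)` has a unique solution `xk k` resp. `x*`, then `xk k → x*`. -/
theorem vi_solution_continuity_in_constraint {n : ℕ}
    (D : Set (EuclideanSpace ℝ (Fin n)))
    (hDne : D.Nonempty) (hDc : IsCompact D) (hDv : Convex ℝ D)
    (Dk : ℕ → Set (EuclideanSpace ℝ (Fin n)))
    (hDk : ∀ k, (Dk k).Nonempty ∧ IsCompact (Dk k) ∧ Convex ℝ (Dk k))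
    (hH : Tendsto (fun k => Metric.hausdorffDist (Dk k) D) atTop (nhds 0))
    (F : EuclideanSpace ℝ (Fin n) → EuclideanSpace ℝ (Fin n)) (hF : Continuous F)
    (xk : ℕ → EuclideanSpace ℝ (Fin n))
    (hxk : ∀ k, xk k ∈ Dk k ∧ ∀ y ∈ Dk k, 0 ≤ ⟪y - xk k, F (xk k)⟫)
    (huniqk : ∀ k x, x ∈ Dk k → (∀ y ∈ Dk k, 0 ≤ ⟪y - x, F x⟫) → x = xk k)
    (xs : EuclideanSpace ℝ (Fin n))
    (hxs : xs ∈ D ∧ ∀ y ∈ D, 0 ≤ ⟪y - xs, F xs⟫)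
    (huniq : ∀ x, x ∈ D → (∀ y ∈ D, 0 ≤ ⟪y - x, F x⟫) → x = xs) :
    Tendsto xk atTop (nhds xs) :=
  vi_solution_continuity_in_constraint_general D hDne hDc Dk hDk hH F hF xk hxk xs huniq
end
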